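/- Let A be a ∨-system, α ∈ A, and Π_α = {x : α(x) = 0}. If x ∈ Π_α with β(x) ≠ 0 for all β ∈ A \ {±α}, and u, v are tangent to Π_α (i.e., α(u) = α(v) = 0), then α applied to Σ_{β∈A, β≠α} (β(u)β(v)/β(x)) β^∨ is zero; that is, the product u*v is again tangent to Π_α. -/

import Mathlib

open Matrix
open scoped Classical

/-- The Gram matrix `G^A = Σ_{α∈A} α⊗α` of a finite set of covectors in `(ℝⁿ)*`. -/
noncomputable def gram {n : ℕ} (A : Finset (Fin n → ℝ)) : Matrix (Fin n) (Fin n) ℝ :=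
  ∑ α ∈ A, vecMulVec α α

/-- The vector `α^∨` dual to the covector `α` with respect to `G^A`. -/
noncomputable def vee {n : ℕ} (A : Finset (Fin n → ℝ)) (α : Fin n → ℝ) : Fin n → ℝ :=
  (gram A)⁻¹ *ᵥ α

/-- `A` is a ∨-system: a finite spanning set of covectors with non-degenerate Gram form
such that for every two-dimensional plane `Π` and every `α ∈ Pl ∩ A`, the vector
`Σ_{β ∈ Pl∩A} β(α^∨) β^∨` is proportional to `α^∨`. -/
def IsVeeSystem {n : ℕ} (A : Finset (Fin n → ℝ)) : Prop :=
  Submodule.span ℝ (A : Set (Fin n → ℝ)) = ⊤ ∧ IsUnit (gram A) ∧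
    ∀ Pl : Submodule ℝ (Fin n → ℝ), Module.finrank ℝ Pl = 2 →
      ∀ α ∈ A, α ∈ Pl → ∃ lam : ℝ,
        ∑ β ∈ A.filter (fun β => β ∈ Pl), (β ⬝ᵥ vee A α) • vee A β = lam • vee A α

/-!
Pair the sum with `α`, using the symmetry `β(α^∨) = α(β^∨)`. The terms with `β(x) = 0`
vanish, and the others are grouped by the plane `Π = span {α, β}`. On `Π` the functionals
`γ ↦ γ(u)`, `γ(v)`, `γ(x)` all vanish at `α`, so they are proportional and every summand of
the group is `c_Π γ(α^∨) γ(x)`. Pairing the ∨-condition `Σ_{γ ∈ Π ∩ A} γ(α^∨) γ^∨ = λ α^∨`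
with `G^A x` gives `Σ_{γ ∈ Π ∩ A} γ(α^∨) γ(x) = λ α(x) = 0`.
-/

section SpanPair

variable {ι K : Type*} [Fintype ι] [Field K] {α β x : ι → K}

lemma finrank_span_pair_eq_two (hα : α ≠ 0) (hαx : α ⬝ᵥ x = 0) (hβx : β ⬝ᵥ x ≠ 0) :
    Module.finrank K (Submodule.span K {α, β}) = 2 := by
  have hind : LinearIndependent K ![α, β] :=
    (LinearIndependent.pair_iff' hα).mpr fun a h => hβx <| by
      rw [← h, smul_dotProduct, hαx, smul_zero]
  rw [← Matrix.range_cons_cons_empty α β ![], finrank_span_eq_card hind, Fintype.card_fin]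

lemma span_pair_eq_of_finrank_eq_two {P : Submodule K (ι → K)} (hP : Module.finrank K P = 2)
    (hαP : α ∈ P) (hβP : β ∈ P) (hα : α ≠ 0) (hαx : α ⬝ᵥ x = 0) (hβx : β ⬝ᵥ x ≠ 0) :
    Submodule.span K {α, β} = P :=
  Submodule.eq_of_le_of_finrank_eq (Submodule.span_le.mpr (Set.insert_subset hαP
    (Set.singleton_subset_iff.mpr hβP))) (by rw [finrank_span_pair_eq_two hα hαx hβx, hP])

lemma dotProduct_eq_div_mul_of_mem_span_pair {γ y : ι → K} (hγ : γ ∈ Submodule.span K {α, β})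
    (hαy : α ⬝ᵥ y = 0) (hαx : α ⬝ᵥ x = 0) (hβx : β ⬝ᵥ x ≠ 0) :
    γ ⬝ᵥ y = (β ⬝ᵥ y / β ⬝ᵥ x) * (γ ⬝ᵥ x) := by
  obtain ⟨a, b, rfl⟩ := Submodule.mem_span_pair.mp hγ
  simp only [add_dotProduct, smul_dotProduct, hαy, hαx, smul_eq_mul, mul_zero, zero_add]
  field_simp

-- Also when `γ ⬝ᵥ x = 0`: both sides are then `0`, by `a / 0 = 0`.
lemma mul_div_eq_of_mem_span_pair {γ u v : ι → K} (hγ : γ ∈ Submodule.span K {α, β})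
    (hαu : α ⬝ᵥ u = 0) (hαv : α ⬝ᵥ v = 0) (hαx : α ⬝ᵥ x = 0) (hβx : β ⬝ᵥ x ≠ 0) :
    (γ ⬝ᵥ u) * (γ ⬝ᵥ v) / (γ ⬝ᵥ x) = (β ⬝ᵥ u) * (β ⬝ᵥ v) / (β ⬝ᵥ x) ^ 2 * (γ ⬝ᵥ x) := by
  rw [dotProduct_eq_div_mul_of_mem_span_pair hγ hαu hαx hβx,
    dotProduct_eq_div_mul_of_mem_span_pair hγ hαv hαx hβx]
  rcases eq_or_ne (γ ⬝ᵥ x) 0 with hγx | hγx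
  · simp [hγx]
  · field_simp


lemma filter_span_pair_eq_filter_mem_span_pair (A : Finset (ι → K)) (hα : α ≠ 0)
    (hαx : α ⬝ᵥ x = 0) (hβx : β ⬝ᵥ x ≠ 0) :
    (A.filter (· ⬝ᵥ x ≠ 0)).filter (fun γ => Submodule.span K {α, γ} = Submodule.span K {α, β})
      = (A.filter (· ∈ Submodule.span K {α, β})).filter (· ⬝ᵥ x ≠ 0) := by
  ext γ
  simp only [Finset.mem_filter]
  constructor
  · rintro ⟨⟨hγA, hγx⟩, hspan⟩
    exact ⟨⟨hγA, hspan ▸ Submodule.subset_span (Set.mem_insert_of_mem _ rfl)⟩, hγx⟩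
  · rintro ⟨⟨hγA, hγP⟩, hγx⟩
    exact ⟨⟨hγA, hγx⟩, span_pair_eq_of_finrank_eq_two (finrank_span_pair_eq_two hα hαx hβx)
      (Submodule.subset_span (Set.mem_insert _ _)) hγP hα hαx hγx⟩

end SpanPair

section Gram

variable {n : ℕ} (A : Finset (Fin n → ℝ))

lemma gram_transpose : (gram A)ᵀ = gram A := by
  simp [_root_.gram, transpose_sum, transpose_vecMulVec]

lemma dotProduct_vee_comm (γ δ : Fin n → ℝ) : γ ⬝ᵥ vee A δ = δ ⬝ᵥ vee A γ := by
  rw [vee, vee, dotProduct_mulVec, ← mulVec_transpose, transpose_nonsing_inv, gram_transpose,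
    dotProduct_comm]

variable {A}

lemma vecMul_gram_dotProduct_vee (hG : IsUnit (gram A)) (x β : Fin n → ℝ) :
    (x ᵥ* gram A) ⬝ᵥ vee A β = x ⬝ᵥ β := by
  rw [vee, ← dotProduct_mulVec, mulVec_mulVec,
    mul_nonsing_inv _ ((isUnit_iff_isUnit_det _).mp hG), one_mulVec]

end Gram

namespace IsVeeSystem

variable {n : ℕ} {A : Finset (Fin n → ℝ)} {α β x : Fin n → ℝ}

lemma sum_dotProduct_vee_mul_dotProduct_eq_zero (hA : IsVeeSystem A)
    {P : Submodule ℝ (Fin n → ℝ)} (hP : Module.finrank ℝ P = 2) (hα : α ∈ A) (hαP : α ∈ P)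
    (hαx : α ⬝ᵥ x = 0) :
    ∑ γ ∈ A.filter (· ∈ P), (γ ⬝ᵥ vee A α) * (γ ⬝ᵥ x) = 0 := by
  obtain ⟨lam, hlam⟩ := hA.2.2 P hP α hα hαP
  have := congrArg ((x ᵥ* gram A) ⬝ᵥ ·) hlam
  simpa only [dotProduct_sum, dotProduct_smul, smul_eq_mul, vecMul_gram_dotProduct_vee hA.2.1,
    dotProduct_comm x, hαx, mul_zero] using this

lemma dotProduct_sum_filter_mem_span_pair_eq_zero (hA : IsVeeSystem A) (hα : α ∈ A)
    (hα0 : α ≠ 0) (hαx : α ⬝ᵥ x = 0) (hβx : β ⬝ᵥ x ≠ 0) {u v : Fin n → ℝ}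
    (hαu : α ⬝ᵥ u = 0) (hαv : α ⬝ᵥ v = 0) :
    α ⬝ᵥ ∑ γ ∈ A.filter (· ∈ Submodule.span ℝ {α, β}),
      ((γ ⬝ᵥ u) * (γ ⬝ᵥ v) / (γ ⬝ᵥ x)) • vee A γ = 0 := by
  calc _ = ∑ γ ∈ A.filter (· ∈ Submodule.span ℝ {α, β}),
        (β ⬝ᵥ u) * (β ⬝ᵥ v) / (β ⬝ᵥ x) ^ 2 * ((γ ⬝ᵥ vee A α) * (γ ⬝ᵥ x)) := by
        rw [dotProduct_sum]
        refine Finset.sum_congr rfl fun γ hγ => ?_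
        rw [dotProduct_smul, dotProduct_vee_comm, smul_eq_mul,
          mul_div_eq_of_mem_span_pair (Finset.mem_filter.mp hγ).2 hαu hαv hαx hβx]
        ring
    _ = 0 := by
        rw [← Finset.mul_sum, hA.sum_dotProduct_vee_mul_dotProduct_eq_zero
          (finrank_span_pair_eq_two hα0 hαx hβx) hα (Submodule.subset_span (Set.mem_insert _ _))
          hαx, mul_zero]

end IsVeeSystem

theorem product_tangent_to_hyperplane_general
    {n : ℕ} (A : Finset (Fin n → ℝ)) (hA : IsVeeSystem A)
    (α : Fin n → ℝ) (hα : α ∈ A)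
    (x : Fin n → ℝ) (hx : α ⬝ᵥ x = 0)
    (u v : Fin n → ℝ) (hu : α ⬝ᵥ u = 0) (hv : α ⬝ᵥ v = 0) :
    α ⬝ᵥ (∑ β ∈ A.erase α, ((β ⬝ᵥ u) * (β ⬝ᵥ v) / (β ⬝ᵥ x)) • vee A β) = 0 := by
  rcases eq_or_ne α 0 with rfl | hα0
  · exact zero_dotProduct _
  set F : (Fin n → ℝ) → Fin n → ℝ := fun β => ((β ⬝ᵥ u) * (β ⬝ᵥ v) / (β ⬝ᵥ x)) • vee A β
  have hF : ∀ β, F β ≠ 0 → β ⬝ᵥ x ≠ 0 := fun β hβ hβx => hβ (by simp [F, hβx])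
  rw [Finset.sum_erase _ (by simp [hx]), ← Finset.sum_filter_of_ne fun β _ => hF β,
    ← Finset.sum_fiberwise_of_maps_to (g := fun β => Submodule.span ℝ {α, β})
      fun β hβ => Finset.mem_image_of_mem (fun β => Submodule.span ℝ {α, β}) hβ, dotProduct_sum]
  refine Finset.sum_eq_zero fun P hP => ?_
  obtain ⟨β, hβ, rfl⟩ := Finset.mem_image.mp hP
  have hβx := (Finset.mem_filter.mp hβ).2
  rw [filter_span_pair_eq_filter_mem_span_pair A hα0 hx hβx,
    Finset.sum_filter_of_ne fun γ _ => hF γ]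
  exact hA.dotProduct_sum_filter_mem_span_pair_eq_zero hα hα0 hx hβx hu hv

/-- if `A` is a ∨-system, `α ∈ A`, `x ∈ Pl_α` with `β(x) ≠ 0` for all
`β ∈ A \ {±α}`, and `u, v` are tangent to `Π_α`, then
`α (Σ_{β∈A, β≠α} (β(u)β(v)/β(x)) β^∨) = 0`, i.e. `u*v` is again tangent to `Π_α`. -/
theorem product_tangent_to_hyperplane
    {n : ℕ} (A : Finset (Fin n → ℝ)) (hA : IsVeeSystem A)
    (α : Fin n → ℝ) (hα : α ∈ A)
    (x : Fin n → ℝ) (hx : α ⬝ᵥ x = 0)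
    (hreg : ∀ β ∈ A, β ≠ α → β ≠ -α → β ⬝ᵥ x ≠ 0)
    (u v : Fin n → ℝ) (hu : α ⬝ᵥ u = 0) (hv : α ⬝ᵥ v = 0) :
    α ⬝ᵥ (∑ β ∈ A.erase α, ((β ⬝ᵥ u) * (β ⬝ᵥ v) / (β ⬝ᵥ x)) • vee A β) = 0 :=
  product_tangent_to_hyperplane_general A hA α hα x hx u v hu hv
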